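/- arXiv:2208.13973 — 6 statements merged into one kernel-verified Lean document; each statement's English description precedes it below -/
import Mathlib

section
/- If G is a finite minimal nonabelian group (nonabelian but every proper subgroup is abelian) and H is a finite nonabelian group in the quasivariety generated by G (equivalently, H embeds in a finite direct power of G), then |G| ≤ |H|. -/
/-! Two non-commuting elements of `H` have non-commuting images in some coordinate
`G` of `G^n`; the image of `H` under that coordinate projection is then a nonabelian
subgroup of `G`, hence all of `G` by minimality, so `G` is a quotient of `H`. -/

theorem Pi.exists_not_commute_apply {ι : Type*} {M : ι → Type*} [∀ i, Mul (M i)]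
    {x y : ∀ i, M i} (h : ¬ Commute x y) : ∃ i, ¬ Commute (x i) (y i) := by
  by_contra! hxy
  exact h (Pi.commute_iff.mpr hxy)

theorem MonoidHom.range_eq_top_of_not_commute {H G : Type*} [Group H] [Group G]
    (hGmin : ∀ K : Subgroup G, K ≠ ⊤ → ∀ x ∈ K, ∀ y ∈ K, x * y = y * x)
    (g : H →* G) {a b : H} (hab : ¬ Commute (g a) (g b)) : g.range = ⊤ := by
  by_contra hne
  exact hab (hGmin g.range hne (g a) ⟨a, rfl⟩ (g b) ⟨b, rfl⟩)

theorem stmt_0_general (G H : Type) [Group G] [Group H] [Finite H]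
    (hGmin : ∀ K : Subgroup G, K ≠ ⊤ → ∀ x ∈ K, ∀ y ∈ K, x * y = y * x)
    (hHna : ¬ ∀ x y : H, x * y = y * x)
    (n : ℕ) (f : H →* (Fin n → G)) (hf : Function.Injective f) :
    Nat.card G ≤ Nat.card H := by
  obtain ⟨a, b, hab⟩ : ∃ a b : H, a * b ≠ b * a := by simpa only [not_forall] using hHna
  have hfab : ¬ Commute (f a) (f b) := fun h =>
    hab (hf (by rw [map_mul, map_mul]; exact h.eq))
  obtain ⟨i, hi⟩ := Pi.exists_not_commute_apply hfab
  let g : H →* G := (Pi.evalMonoidHom (fun _ => G) i).comp f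
  have hsurj : Function.Surjective g :=
    MonoidHom.range_eq_top.mp (g.range_eq_top_of_not_commute hGmin hi)
  exact Nat.card_le_card_of_surjective g hsurj

/-- If `G` is a finite minimal nonabelian group (nonabelian but every proper subgroup
is abelian) and `H` is a finite nonabelian group embedding into a finite direct power
`G^n`, then `|G| ≤ |H|`. -/
theorem stmt_0 (G H : Type) [Group G] [Group H] [Finite G] [Finite H]
    (hGna : ¬ ∀ x y : G, x * y = y * x)
    (hGmin : ∀ K : Subgroup G, K ≠ ⊤ → ∀ x ∈ K, ∀ y ∈ K, x * y = y * x)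
    (hHna : ¬ ∀ x y : H, x * y = y * x)
    (n : ℕ) (f : H →* (Fin n → G)) (hf : Function.Injective f) :
    Nat.card G ≤ Nat.card H :=
  stmt_0_general G H hGmin hHna n f hf
end

section
/- In the quaternion group Q8 = ⟨a, b | a^4 = 1, a^2 = b^2, aba = b⟩, the subgroup of Q8 × Q8 generated by (a,1) and (ab,b) is isomorphic to the modular group M_2(2,2) = ⟨x, y | x^4 = y^4 = 1, xy = yx^3⟩, a nonabelian group of order 16. -/
/-- Relations of the quaternion group `Q8 = ⟨a, b | a^4 = 1, a^2 = b^2, aba = b⟩`,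
with generators `a = 0`, `b = 1`. -/
def Q8Rels : Set (FreeGroup (Fin 2)) :=
  { (FreeGroup.of 0) ^ 4,
    (FreeGroup.of 0) ^ 2 * ((FreeGroup.of 1) ^ 2)⁻¹,
    (FreeGroup.of 0 * FreeGroup.of 1 * FreeGroup.of 0) * (FreeGroup.of 1)⁻¹ }

/-- Relations of `M_2(2,2) = ⟨x, y | x^4 = y^4 = 1, xy = yx^3⟩`,
with generators `x = 0`, `y = 1`. -/
def M22Rels : Set (FreeGroup (Fin 2)) :=
  { (FreeGroup.of 0) ^ 4,
    (FreeGroup.of 1) ^ 4,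
    (FreeGroup.of 0 * FreeGroup.of 1) * (FreeGroup.of 1 * (FreeGroup.of 0) ^ 3)⁻¹ }

/-!
Both presented groups are metacyclic: their generators satisfy `a b = b a³`, so every element
is a word `b ^ j * a ^ i`, which bounds `Q8` by 8 and `M_2(2,2)` by 16 elements. Sending these
normal forms to Mathlib's `QuaternionGroup 2` (resp. its square) shows that they are pairwise
distinct. Hence `Q8` embeds into `QuaternionGroup 2`, and `x ↦ (a, 1)`, `y ↦ (ab, b)` is an
injective homomorphism `M_2(2,2) → Q8 × Q8` with image the subgroup in question; every identity
needed along the way is checked by `decide` in the concrete group.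
-/

open Subgroup

section NormalForm

variable {G : Type*} [Group G] {a b : G} {k l m n : ℕ}

theorem exists_eq_pow_mul_pow_of_mul_eq (hab : a * b = b * a ^ l) (ha : IsOfFinOrder a)
    (hb : IsOfFinOrder b) {g : G} (hg : g ∈ closure {a, b}) :
    ∃ j i : ℕ, g = b ^ j * a ^ i := by
  have hfin : ∀ x ∈ ({a, b} : Set G), IsOfFinOrder x := by
    rintro x (rfl | rfl) <;> assumption
  rw [← mem_toSubmonoid, closure_toSubmonoid_of_isOfFinOrder hfin] at hg
  induction hg using Submonoid.closure_induction_right with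
  | one => exact ⟨0, 0, by simp⟩
  | mul_right x _ y hy ih =>
    obtain ⟨j, i, rfl⟩ := ih
    rcases hy with rfl | rfl
    · exact ⟨j, i + 1, by rw [pow_succ, mul_assoc]⟩
    · refine ⟨j + 1, l * i, ?_⟩
      rw [mul_assoc, ← (SemiconjBy.pow_right hab.symm i).eq, pow_mul, ← mul_assoc, pow_succ]

theorem surjective_pow_mul_pow (hgen : closure {a, b} = ⊤) (hab : a * b = b * a ^ l)
    (ha : a ^ m = 1) (hb : b ^ n = a ^ k) (hm : 0 < m) (hn : 0 < n) :
    Function.Surjective fun p : Fin n × Fin m ↦ b ^ (p.1 : ℕ) * a ^ (p.2 : ℕ) := by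
  have ha' : IsOfFinOrder a := isOfFinOrder_iff_pow_eq_one.mpr ⟨m, hm, ha⟩
  have hb' : IsOfFinOrder b := isOfFinOrder_iff_pow_eq_one.mpr
    ⟨n * m, Nat.mul_pos hn hm, by rw [pow_mul, hb, ← pow_mul, mul_comm, pow_mul, ha, one_pow]⟩
  intro g
  obtain ⟨j, i, rfl⟩ := exists_eq_pow_mul_pow_of_mul_eq hab ha' hb' (hgen ▸ mem_top g)
  refine ⟨(⟨j % n, Nat.mod_lt j hn⟩, ⟨(k * (j / n) + i) % m, Nat.mod_lt _ hm⟩), ?_⟩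
  dsimp only
  rw [← pow_eq_pow_mod _ ha, pow_add, pow_mul, ← hb, ← pow_mul, ← mul_assoc, ← pow_add,
    Nat.mod_add_div]

end NormalForm

theorem PresentedGroup.closure_of_zero_of_one (rels : Set (FreeGroup (Fin 2))) :
    closure {(of 0 : PresentedGroup rels), of 1} = ⊤ := by
  rw [← closure_range_of rels]
  congr 1
  ext
  simp [Fin.exists_fin_two, eq_comm]

open PresentedGroup QuaternionGroup

section Q8

local notation "A" => (of 0 : PresentedGroup Q8Rels)
local notation "B" => (of 1 : PresentedGroup Q8Rels)

theorem q8_pow_four : A ^ 4 = 1 :=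
  one_of_mem (rels := Q8Rels) (x := FreeGroup.of 0 ^ 4) (by simp [Q8Rels])

theorem q8_sq : B ^ 2 = A ^ 2 :=
  (mul_inv_eq_one.mp <| one_of_mem (rels := Q8Rels)
    (x := FreeGroup.of 0 ^ 2 * (FreeGroup.of 1 ^ 2)⁻¹) (by simp [Q8Rels])).symm

theorem q8_mul : A * B = B * A ^ 3 := by
  have hABA : A * B * A = B := mul_inv_eq_one.mp <| one_of_mem (rels := Q8Rels)
    (x := FreeGroup.of 0 * FreeGroup.of 1 * FreeGroup.of 0 * (FreeGroup.of 1)⁻¹)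
    (by simp [Q8Rels])
  have hinv : A⁻¹ = A ^ 3 := inv_eq_of_mul_eq_one_right (by rw [← pow_succ', q8_pow_four])
  rw [← hinv]
  exact eq_mul_inv_of_mul_eq hABA

theorem q8_surjective_pow_mul_pow :
    Function.Surjective fun p : Fin 2 × Fin 4 ↦ B ^ (p.1 : ℕ) * A ^ (p.2 : ℕ) :=
  surjective_pow_mul_pow (closure_of_zero_of_one Q8Rels) q8_mul q8_pow_four q8_sq
    (by norm_num) (by norm_num)

def q8ToQuaternionGroup : PresentedGroup Q8Rels →* QuaternionGroup 2 :=
  toGroup (f := ![a 1, xa 0]) <| by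
    rintro r (rfl | rfl | rfl) <;>
      simp only [map_pow, map_mul, map_inv, FreeGroup.lift_apply_of, Matrix.cons_val_zero,
        Matrix.cons_val_one, Matrix.cons_val_fin_one] <;>
      decide

theorem q8ToQuaternionGroup_injective : Function.Injective q8ToQuaternionGroup := by
  refine Function.Injective.of_comp_right ?_ q8_surjective_pow_mul_pow
  have : q8ToQuaternionGroup ∘ (fun p : Fin 2 × Fin 4 ↦ B ^ (p.1 : ℕ) * A ^ (p.2 : ℕ)) =
      fun p ↦ xa 0 ^ (p.1 : ℕ) * a 1 ^ (p.2 : ℕ) := by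
    funext p
    simp [q8ToQuaternionGroup]
  rw [this]
  decide

end Q8

section M22

local notation "X" => (of 0 : PresentedGroup M22Rels)
local notation "Y" => (of 1 : PresentedGroup M22Rels)

theorem m22_pow_four_left : X ^ 4 = 1 :=
  one_of_mem (rels := M22Rels) (x := FreeGroup.of 0 ^ 4) (by simp [M22Rels])

theorem m22_pow_four_right : Y ^ 4 = 1 :=
  one_of_mem (rels := M22Rels) (x := FreeGroup.of 1 ^ 4) (by simp [M22Rels])

theorem m22_mul : X * Y = Y * X ^ 3 :=
  mul_inv_eq_one.mp <| one_of_mem (rels := M22Rels)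
    (x := FreeGroup.of 0 * FreeGroup.of 1 * (FreeGroup.of 1 * FreeGroup.of 0 ^ 3)⁻¹)
    (by simp [M22Rels])

theorem m22_surjective_pow_mul_pow :
    Function.Surjective fun p : Fin 4 × Fin 4 ↦ Y ^ (p.1 : ℕ) * X ^ (p.2 : ℕ) :=
  surjective_pow_mul_pow (k := 0) (closure_of_zero_of_one M22Rels) m22_mul m22_pow_four_left
    (by rw [pow_zero, m22_pow_four_right]) (by norm_num) (by norm_num)

abbrev Q8Sq := PresentedGroup Q8Rels × PresentedGroup Q8Rels

def q8SqToQuaternionGroup : Q8Sq →* QuaternionGroup 2 × QuaternionGroup 2 :=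
  q8ToQuaternionGroup.prodMap q8ToQuaternionGroup

theorem q8SqToQuaternionGroup_injective : Function.Injective q8SqToQuaternionGroup :=
  q8ToQuaternionGroup_injective.prodMap q8ToQuaternionGroup_injective

def m22ToQ8Sq : PresentedGroup M22Rels →* Q8Sq :=
  toGroup (f := ![(of 0, 1), (of 0 * of 1, of 1)]) <| by
    intro r hr
    apply q8SqToQuaternionGroup_injective
    rcases hr with rfl | rfl | rfl <;>
      simp only [map_pow, map_mul, map_inv, map_one, FreeGroup.lift_apply_of, Matrix.cons_val_zero,
        Matrix.cons_val_one, Matrix.cons_val_fin_one, q8SqToQuaternionGroup, MonoidHom.coe_prodMap,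
        Prod.map_apply, q8ToQuaternionGroup, toGroup.of] <;>
      decide

@[simp]
theorem q8SqToQuaternionGroup_m22ToQ8Sq_of_zero :
    q8SqToQuaternionGroup (m22ToQ8Sq X) = (a 1, 1) := by
  simp [m22ToQ8Sq, q8SqToQuaternionGroup, q8ToQuaternionGroup]

@[simp]
theorem q8SqToQuaternionGroup_m22ToQ8Sq_of_one :
    q8SqToQuaternionGroup (m22ToQ8Sq Y) = (a 1 * xa 0, xa 0) := by
  simp [m22ToQ8Sq, q8SqToQuaternionGroup, q8ToQuaternionGroup]

theorem injective_m22ToQ8Sq_comp_pow_mul_pow :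
    Function.Injective
      (m22ToQ8Sq ∘ fun p : Fin 4 × Fin 4 ↦ Y ^ (p.1 : ℕ) * X ^ (p.2 : ℕ)) := by
  refine Function.Injective.of_comp (f := q8SqToQuaternionGroup) ?_
  have : q8SqToQuaternionGroup ∘ m22ToQ8Sq ∘
      (fun p : Fin 4 × Fin 4 ↦ Y ^ (p.1 : ℕ) * X ^ (p.2 : ℕ)) =
      fun p ↦ (a 1 * xa 0, xa 0) ^ (p.1 : ℕ) * (a 1, 1) ^ (p.2 : ℕ) := by
    funext p
    simp
  rw [this]
  decide

theorem m22ToQ8Sq_injective : Function.Injective m22ToQ8Sq :=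
  injective_m22ToQ8Sq_comp_pow_mul_pow.of_comp_right m22_surjective_pow_mul_pow

theorem card_m22 : Nat.card (PresentedGroup M22Rels) = 16 := by
  rw [← Nat.card_congr (Equiv.ofBijective _
    ⟨injective_m22ToQ8Sq_comp_pow_mul_pow.of_comp, m22_surjective_pow_mul_pow⟩)]
  simp

theorem m22_mul_ne_mul : X * Y ≠ Y * X := fun h ↦ by
  have := congrArg q8SqToQuaternionGroup (congrArg m22ToQ8Sq h)
  simp only [map_mul, q8SqToQuaternionGroup_m22ToQ8Sq_of_zero,
    q8SqToQuaternionGroup_m22ToQ8Sq_of_one] at this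
  exact absurd this (by decide)

theorem range_m22ToQ8Sq :
    m22ToQ8Sq.range = closure ({(of 0, 1), (of 0 * of 1, of 1)} : Set Q8Sq) := by
  rw [MonoidHom.range_eq_map, ← closure_of_zero_of_one, MonoidHom.map_closure, Set.image_pair]
  simp [m22ToQ8Sq]

end M22

/-- In `Q8 × Q8`, the subgroup generated by `(a, 1)` and `(ab, b)` is isomorphic to
the metacyclic group `M_2(2,2)`, a nonabelian group of order 16. -/
theorem stmt_5 :
    letI Q8 := PresentedGroup Q8Rels
    letI A : Q8 := PresentedGroup.of 0
    letI B : Q8 := PresentedGroup.of 1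
    letI H : Subgroup (Q8 × Q8) := Subgroup.closure {(A, 1), (A * B, B)}
    Nonempty (H ≃* PresentedGroup M22Rels) ∧
      Nat.card (PresentedGroup M22Rels) = 16 ∧
      ¬ ∀ g h : PresentedGroup M22Rels, g * h = h * g :=
  ⟨⟨(MulEquiv.subgroupCongr range_m22ToQ8Sq.symm).trans
      (MonoidHom.ofInjective m22ToQ8Sq_injective).symm⟩,
    card_m22, fun h ↦ m22_mul_ne_mul (h _ _)⟩
end

section
/- A semigroup S with zero element 0 admits a flat semiring structure (with addition a+b = a if a = b, and a+b = 0 if a ≠ b) satisfying both distributive laws if and only if S is 0-cancellative: for all a, b, c ∈ S, ab = ac ≠ 0 implies b = c, and ba = ca ≠ 0 implies b = c. -/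
/-- Both sides of the distributive law are `z` unless `b = c` or `f a b = f a c`. -/
theorem flat_distrib_iff_cancel {S : Type*} [DecidableEq S] (f : S → S → S) (z a b c : S)
    (hz : f a z = z) :
    f a (if b = c then b else z) = (if f a b = f a c then f a b else z) ↔
      (f a b = f a c → f a b ≠ z → b = c) := by
  by_cases hbc : b = c
  · simp [hbc]
  · rw [if_neg hbc, hz]
    by_cases hcancel : f a b = f a c <;> simp [hcancel, hbc, eq_comm]

/-- A semigroup `S` with zero element `z` admits a flat semiring structure
(addition `a + b = a` if `a = b` and `a + b = z` otherwise) satisfying both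
distributive laws if and only if `S` is `0`-cancellative. -/
theorem stmt_6 (S : Type) [Semigroup S] [DecidableEq S] (z : S)
    (hz : ∀ x : S, z * x = z ∧ x * z = z) :
    ((∀ a b c : S, a * (if b = c then b else z) = if a * b = a * c then a * b else z) ∧
     (∀ a b c : S, (if b = c then b else z) * a = if b * a = c * a then b * a else z)) ↔
    ((∀ a b c : S, a * b = a * c → a * b ≠ z → b = c) ∧
     (∀ a b c : S, b * a = c * a → b * a ≠ z → b = c)) := by
  refine and_congr ?_ ?_ <;> refine forall₃_congr fun a b c => ?_
  · exact flat_distrib_iff_cancel (· * ·) z a b c (hz a).2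
  · exact flat_distrib_iff_cancel (fun a b => b * a) z a b c (hz a).1
end

section
/- Every nontrivial subdirectly irreducible flat semiring satisfying the identities xy ≈ yx, x²y ≈ x², and x₁x₂x₃ ≈ y₁y₂y₃ and failing x₁x₂ ≈ y₁y₂ has a multiplication table in which every product of two equal elements distinct from 0 and the unique minimal nonzero element ω is 0, the product ab of any two distinct such elements is either 0 or ω, each such element a has exactly one partner b with ab = ω, and the multiplicative table is symmetric. -/
open scoped Classical

/-!
Collapsing a multiplicative ideal `I ∋ z` of a flat semiring to a point is a congruence (compatible
with `+` because `x + w ∈ {x, z}`), so the monolith pair of a subdirectly irreducible flat semiring lies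
in every such ideal with a nonzero element. Applied to the ideals `{z, p}` with `p` annihilating
everything, this shows that there is at most one nonzero annihilator. Under `x₁x₂x₃ ≈ y₁y₂y₃` every
nonzero product is an annihilator, which gives `ω`; in the commutative case an element with no
product equal to `ω` would be one too, which gives the partners. Partners are unique because
`a(b + b') = ab + ab'` while `b + b' = z` for `b ≠ b'`.
-/

variable {S : Type*} [Add S] {z : S}

theorem flat_add_mem_left (hadd : ∀ a b : S, a + b = if a = b then a else z) {I : Set S}
    (hzI : z ∈ I) {x : S} (w : S) (hx : x ∈ I) : x + w ∈ I := by
  rw [hadd]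
  split_ifs
  exacts [hx, hzI]

theorem flat_add_mem_right (hadd : ∀ a b : S, a + b = if a = b then a else z) {I : Set S}
    (hzI : z ∈ I) (x : S) {w : S} (hw : w ∈ I) : x + w ∈ I := by
  rw [hadd]
  split_ifs with h
  exacts [h ▸ hw, hzI]

variable [Mul S]

def IsMonolithPair (u v : S) : Prop :=
  u ≠ v ∧ ∀ c : RingCon S, (∃ x y : S, x ≠ y ∧ c x y) → c u v

def reesCon (hadd : ∀ a b : S, a + b = if a = b then a else z) (I : Set S) (hzI : z ∈ I)
    (hI : ∀ s x : S, x ∈ I → s * x ∈ I ∧ x * s ∈ I) : RingCon S where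
  r x y := x = y ∨ (x ∈ I ∧ y ∈ I)
  iseqv :=
    ⟨fun _ => Or.inl rfl, fun h => h.imp Eq.symm And.symm, fun hxy hyw => by
      rcases hxy with rfl | ⟨hx, hy⟩
      · exact hyw
      rcases hyw with rfl | ⟨_, hw⟩
      exacts [Or.inr ⟨hx, hy⟩, Or.inr ⟨hx, hw⟩]⟩
  mul' := by
    rintro a b c d (rfl | ⟨ha, hb⟩) (rfl | ⟨hc, hd⟩)
    · exact Or.inl rfl
    · exact Or.inr ⟨(hI a _ hc).1, (hI a _ hd).1⟩
    · exact Or.inr ⟨(hI c _ ha).2, (hI c _ hb).2⟩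
    · exact Or.inr ⟨(hI c _ ha).2, (hI d _ hb).2⟩
  add' := by
    rintro a b c d (rfl | ⟨ha, hb⟩) (rfl | ⟨hc, hd⟩)
    · exact Or.inl rfl
    · exact Or.inr ⟨flat_add_mem_right hadd hzI a hc, flat_add_mem_right hadd hzI a hd⟩
    · exact Or.inr ⟨flat_add_mem_left hadd hzI c ha, flat_add_mem_left hadd hzI c hb⟩
    · exact Or.inr ⟨flat_add_mem_left hadd hzI c ha, flat_add_mem_left hadd hzI d hb⟩

theorem IsMonolithPair.mem_of_ideal {u v : S} (h : IsMonolithPair u v)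
    (hadd : ∀ a b : S, a + b = if a = b then a else z) {I : Set S} (hzI : z ∈ I)
    (hI : ∀ s x : S, x ∈ I → s * x ∈ I ∧ x * s ∈ I) {a : S} (ha : a ∈ I) (haz : a ≠ z) :
    u ∈ I ∧ v ∈ I :=
  (h.2 (reesCon hadd I hzI hI) ⟨z, a, haz.symm, Or.inr ⟨hzI, ha⟩⟩).resolve_left h.1

theorem IsMonolithPair.eq_of_annihilates {u v : S} (h : IsMonolithPair u v)
    (hadd : ∀ a b : S, a + b = if a = b then a else z) (hz : ∀ x : S, z * x = z ∧ x * z = z)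
    {p q : S} (hp : p ≠ z) (hq : q ≠ z) (hpa : ∀ s : S, s * p = z ∧ p * s = z)
    (hqa : ∀ s : S, s * q = z ∧ q * s = z) : p = q := by
  have mem_pair : ∀ {p : S}, p ≠ z → (∀ s : S, s * p = z ∧ p * s = z) →
      u ∈ ({z, p} : Set S) ∧ v ∈ ({z, p} : Set S) := fun {p} hp hpa =>
    h.mem_of_ideal hadd (Set.mem_insert z {p})
      (by rintro s x (rfl | rfl) <;> simp [hz, hpa]) (Set.mem_insert_of_mem z rfl) hp
  obtain ⟨hup, hvp⟩ := mem_pair hp hpa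
  obtain ⟨huq, hvq⟩ := mem_pair hq hqa
  simp only [Set.mem_insert_iff, Set.mem_singleton_iff] at hup hvp huq hvq
  by_cases hu : u = z
  · have hv : v ≠ z := hu ▸ h.1.symm
    exact (hvp.resolve_left hv).symm.trans (hvq.resolve_left hv)
  · exact (hup.resolve_left hu).symm.trans (huq.resolve_left hu)

theorem flat_mul_left_cancel (hadd : ∀ a b : S, a + b = if a = b then a else z)
    (hdist : ∀ a b c : S, a * (b + c) = a * b + a * c) (hz : ∀ x : S, x * z = z) {a b c : S}
    (hne : a * b ≠ z) (h : a * b = a * c) : b = c := by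
  by_contra hbc
  have := hdist a b c
  rw [hadd b c, if_neg hbc, hz, ← h, hadd, if_pos rfl] at this
  exact hne this.symm

theorem stmt_8_general (S : Type) [Semigroup S] [Add S] (z : S)
    (hz : ∀ x : S, z * x = z ∧ x * z = z)
    (hadd : ∀ a b : S, a + b = if a = b then a else z)
    (hdist : ∀ a b c : S, a * (b + c) = a * b + a * c ∧ (b + c) * a = b * a + c * a)
    (hSI : ∃ u v : S, u ≠ v ∧ ∀ c : RingCon S, (∃ x y : S, x ≠ y ∧ c x y) → c u v)
    (hcomm : ∀ x y : S, x * y = y * x)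
    (hsq : ∀ x y : S, x * x * y = x * x)
    (h3 : ∀ x₁ x₂ x₃ y₁ y₂ y₃ : S, x₁ * x₂ * x₃ = y₁ * y₂ * y₃)
    (hfail : ¬ ∀ a b c d : S, a * b = c * d) :
    ∃ ω : S, ω ≠ z ∧
      (∀ a : S, a ≠ z → a ≠ ω → a * a = z) ∧
      (∀ a b : S, a ≠ z → a ≠ ω → b ≠ z → b ≠ ω → a ≠ b → a * b = z ∨ a * b = ω) ∧
      (∀ a : S, a ≠ z → a ≠ ω → ∃! b : S, a * b = ω) ∧
      (∀ a b : S, a * b = b * a) := by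
  obtain ⟨u, v, hmono⟩ : ∃ u v : S, IsMonolithPair u v := hSI
  have htriple : ∀ a b c : S, a * b * c = z := fun a b c => by
    rw [h3 a b c z z z, (hz z).1, (hz z).1]
  have hann : ∀ a b s : S, s * (a * b) = z ∧ a * b * s = z := fun a b s =>
    ⟨by rw [← mul_assoc, htriple], htriple a b s⟩
  obtain ⟨a₀, b₀, hω⟩ : ∃ a b : S, a * b ≠ z := by
    by_contra! hall
    exact hfail fun a b c d => (hall a b).trans (hall c d).symm
  have hprod : ∀ a b : S, a * b = z ∨ a * b = a₀ * b₀ := fun a b =>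
    or_iff_not_imp_left.2 fun hab => hmono.eq_of_annihilates hadd hz hab hω (hann a b) (hann a₀ b₀)
  refine ⟨a₀ * b₀, hω, fun a _ _ => by simpa [(hz _).2] using (hsq a z).symm,
    fun a b _ _ _ _ _ => hprod a b, fun a haz haω => ?_, hcomm⟩
  obtain ⟨b, hb⟩ : ∃ b, a * b = a₀ * b₀ := by
    by_contra! hnone
    have hann_a : ∀ s : S, s * a = z ∧ a * s = z := fun s =>
      have has : a * s = z := (hprod a s).resolve_right (hnone s)
      ⟨hcomm s a ▸ has, has⟩
    exact haω (hmono.eq_of_annihilates hadd hz haz hω hann_a (hann a₀ b₀))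
  exact ⟨b, hb, fun b' hb' => flat_mul_left_cancel hadd (fun a b c => (hdist a b c).1)
    (fun x => (hz x).2) (hb'.trans_ne hω) (hb'.trans hb.symm)⟩

/-- Every nontrivial subdirectly irreducible flat semiring satisfying
`xy ≈ yx`, `x²y ≈ x²` and `x₁x₂x₃ ≈ y₁y₂y₃`, but failing `x₁x₂ ≈ y₁y₂`, has a unique
minimal nonzero element `ω` such that: every square of an element distinct from `0` and
`ω` is `0`; the product of two distinct such elements is `0` or `ω`; each such element
has exactly one partner with product `ω`; and the multiplication table is symmetric.
Subdirect irreducibility is expressed via a monolith pair: elements `u ≠ v` identified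
by every nontrivial semiring congruence. -/
theorem stmt_8 (S : Type) [Semigroup S] [Add S] (z : S)
    (hz : ∀ x : S, z * x = z ∧ x * z = z)
    (hadd : ∀ a b : S, a + b = if a = b then a else z)
    (hdist : ∀ a b c : S, a * (b + c) = a * b + a * c ∧ (b + c) * a = b * a + c * a)
    (hnt : ∃ a b : S, a ≠ b)
    (hSI : ∃ u v : S, u ≠ v ∧ ∀ c : RingCon S, (∃ x y : S, x ≠ y ∧ c x y) → c u v)
    (hcomm : ∀ x y : S, x * y = y * x)
    (hsq : ∀ x y : S, x * x * y = x * x)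
    (h3 : ∀ x₁ x₂ x₃ y₁ y₂ y₃ : S, x₁ * x₂ * x₃ = y₁ * y₂ * y₃)
    (hfail : ¬ ∀ a b c d : S, a * b = c * d) :
    ∃ ω : S, ω ≠ z ∧
      (∀ a : S, a ≠ z → a ≠ ω → a * a = z) ∧
      (∀ a b : S, a ≠ z → a ≠ ω → b ≠ z → b ≠ ω → a ≠ b → a * b = z ∨ a * b = ω) ∧
      (∀ a : S, a ≠ z → a ≠ ω → ∃! b : S, a * b = ω) ∧
      (∀ a b : S, a * b = b * a) :=
  stmt_8_general S z hz hadd hdist hSI hcomm hsq h3 hfail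
end

section
/- Every flat semiring satisfying the identities xy + x ≈ xy and xy ≈ yx that is subdirectly irreducible is isomorphic to one of the two 2-element flat semirings: S(a) (where ω² = 0) or M(1) (where ω² = ω). -/
open scoped Classical

/-!
In a flat semiring with `xy + x = xy`, every product `xy` is `0` or `x`; with commutativity,
`xy = 0` whenever `x ≠ y`. Hence for every `a ≠ 0` the map sending `a` to `0` and fixing
everything else is an endomorphism, and its kernel is a congruence whose only nontrivial
class is `{a, 0}`. The monolith pair lies in every such class, so there is only one nonzero
element.
-/

def RingCon.kerOfMapAddMul {R T : Type*} [Add R] [Mul R] [Add T] [Mul T] (f : R → T)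
    (map_add : ∀ x y, f (x + y) = f x + f y) (map_mul : ∀ x y, f (x * y) = f x * f y) :
    RingCon R where
  r x y := f x = f y
  iseqv := ⟨fun _ => rfl, Eq.symm, Eq.trans⟩
  add' h₁ h₂ := by simp only [map_add, h₁, h₂]
  mul' h₁ h₂ := by simp only [map_mul, h₁, h₂]

@[simp]
theorem RingCon.kerOfMapAddMul_apply {R T : Type*} [Add R] [Mul R] [Add T] [Mul T] (f : R → T)
    (map_add : ∀ x y, f (x + y) = f x + f y) (map_mul : ∀ x y, f (x * y) = f x * f y) {x y : R} :
    kerOfMapAddMul f map_add map_mul x y ↔ f x = f y :=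
  Iff.rfl

section FlatSemiring

variable {S : Type*} [Add S] {z : S}

theorem update_id_add (hadd : ∀ a b : S, a + b = if a = b then a else z) {a : S} (ha : a ≠ z)
    (x y : S) :
    Function.update id a z (x + y) = Function.update id a z x + Function.update id a z y := by
  simp only [Function.update_apply, id, hadd]
  grind

variable [Mul S]

theorem mul_eq_zero_or_self (hadd : ∀ a b : S, a + b = if a = b then a else z)
    (hid : ∀ x y : S, x * y + x = x * y) (x y : S) : x * y = z ∨ x * y = x := by
  have h := hid x y
  rw [hadd] at h
  split_ifs at h with hxy
  · exact Or.inr hxy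
  · exact Or.inl h.symm

theorem mul_eq_zero_of_ne (hadd : ∀ a b : S, a + b = if a = b then a else z)
    (hid : ∀ x y : S, x * y + x = x * y) (hcomm : ∀ x y : S, x * y = y * x)
    {x y : S} (hxy : x ≠ y) : x * y = z := by
  rcases mul_eq_zero_or_self hadd hid x y with h | h
  · exact h
  rcases mul_eq_zero_or_self hadd hid y x with h' | h'
  · rwa [hcomm]
  · exact absurd (h.symm.trans (hcomm x y ▸ h')) hxy

theorem update_id_mul (hz : ∀ x : S, z * x = z ∧ x * z = z)
    (hadd : ∀ a b : S, a + b = if a = b then a else z)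
    (hid : ∀ x y : S, x * y + x = x * y) (hcomm : ∀ x y : S, x * y = y * x)
    {a : S} (ha : a ≠ z) (x y : S) :
    Function.update id a z (x * y) = Function.update id a z x * Function.update id a z y := by
  have hxy := mul_eq_zero_or_self hadd hid x y
  have hne : x ≠ y → x * y = z := mul_eq_zero_of_ne hadd hid hcomm
  simp only [Function.update_apply, id]
  grind

end FlatSemiring

theorem stmt_11_general (S : Type) [Semigroup S] [Add S] (z : S)
    (hz : ∀ x : S, z * x = z ∧ x * z = z)
    (hadd : ∀ a b : S, a + b = if a = b then a else z)
    (hSI : ∃ u v : S, u ≠ v ∧ ∀ c : RingCon S, (∃ x y : S, x ≠ y ∧ c x y) → c u v)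
    (hid : ∀ x y : S, x * y + x = x * y)
    (hcomm : ∀ x y : S, x * y = y * x) :
    ∃ ω : S, ω ≠ z ∧ (∀ x : S, x = z ∨ x = ω) ∧ (ω * ω = z ∨ ω * ω = ω) := by
  obtain ⟨u, v, huv, hmono⟩ := hSI
  have hpair : ∀ a, a ≠ z → (u = a ∧ v = z) ∨ (u = z ∧ v = a) := by
    intro a ha
    have h := hmono (RingCon.kerOfMapAddMul _ (update_id_add hadd ha)
      (update_id_mul hz hadd hid hcomm ha)) ⟨a, z, ha, by simp [ha.symm]⟩
    simp only [RingCon.kerOfMapAddMul_apply, Function.update_apply, id] at h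
    grind
  obtain ⟨ω, hω⟩ : ∃ ω, ω ≠ z := if hu : u = z then ⟨v, hu ▸ huv.symm⟩ else ⟨u, hu⟩
  refine ⟨ω, hω, fun x => or_iff_not_imp_left.2 fun hx => ?_, mul_eq_zero_or_self hadd hid ω ω⟩
  grind [hpair x hx, hpair ω hω]

/-- Every subdirectly irreducible flat semiring satisfying `xy + x ≈ xy` and `xy ≈ yx`
is isomorphic to one of the two 2-element flat semirings `S(a)` (where `ω² = 0`) or
`M(1)` (where `ω² = ω`): its carrier is `{0, ω}` for a single nonzero element `ω`, and
`ω·ω` is `0` or `ω`.  Subdirect irreducibility is expressed via a monolith pair: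
elements `u ≠ v` identified by every nontrivial semiring congruence. -/
theorem stmt_11 (S : Type) [Semigroup S] [Add S] (z : S)
    (hz : ∀ x : S, z * x = z ∧ x * z = z)
    (hadd : ∀ a b : S, a + b = if a = b then a else z)
    (hdist : ∀ a b c : S, a * (b + c) = a * b + a * c ∧ (b + c) * a = b * a + c * a)
    (hSI : ∃ u v : S, u ≠ v ∧ ∀ c : RingCon S, (∃ x y : S, x ≠ y ∧ c x y) → c u v)
    (hid : ∀ x y : S, x * y + x = x * y)
    (hcomm : ∀ x y : S, x * y = y * x) :
    ∃ ω : S, ω ≠ z ∧ (∀ x : S, x = z ∨ x = ω) ∧ (ω * ω = z ∨ ω * ω = ω) :=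
  stmt_11_general S z hz hadd hSI hid hcomm
end

section
/- In the flat semiring S(p_n) built on the word p_n = x₀³ (∏_{i=1}^n y_i²) x₁³, the identity xyz + yzx ≈ xyz + yzx + xxx holds: for any elements u, v, w, if both uvw and vwu are nonzero, then u = v = w and u³ is a factor-element, making both sides equal. -/
open scoped Classical

/-- The word `p_n = x₀³ (∏_{i=1}^n y_i²) x₁³`, over the alphabet `ℕ` with `x₀ = 0`,
`x₁ = 1` and `y_i = i + 1`. -/
def pWord (n : ℕ) : List ℕ :=
  [0, 0, 0] ++ ((List.range n).map (fun i => [i + 2, i + 2])).flatten ++ [1, 1, 1]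

/-- The carrier of the flat semiring `S(w)`: `0` (i.e. `none`) together with the
nonempty factors (contiguous subwords) of the word `w`. -/
def FlatWord (w : List ℕ) : Type := Option {u : List ℕ // u ≠ [] ∧ u <:+: w}

/-- Multiplication in `S(w)`: concatenation when the result is a factor of `w`,
and `0` otherwise. -/
noncomputable def fwMul (w : List ℕ) : FlatWord w → FlatWord w → FlatWord w
  | some u, some v =>
      if h : (u.1 ++ v.1) <:+: w then
        some ⟨u.1 ++ v.1, ⟨by simp [u.2.1], h⟩⟩
      else none
  | _, _ => none

/-- Flat addition in `S(w)`: `s + s = s` and `s + t = 0` for `s ≠ t`. -/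
noncomputable def fwAdd (w : List ℕ) (s t : FlatWord w) : FlatWord w :=
  if s = t then s else none

/-!
Rank the letters of `p_n` as `x₀ < y₁ < ⋯ < y_n < x₁`; then `p_n` is sorted, so any factor is
sorted too. If `uvw` and `vwu` are both factors, every letter of `u` is at most every letter of
`vw` and vice versa, so `uvw` is a power of a single letter. No letter occurs more than three
times in `p_n`, hence `u`, `v`, `w` are the same one-letter word and all three monomials
`xyz`, `yzx`, `xxx` evaluate to the same element.
-/

lemma List.Pairwise.eq_of_append_sublist_of_append_sublist {α : Type*} {r : α → α → Prop}
    {p u v : List α} (hp : p.Pairwise r) (hanti : ∀ a ∈ p, ∀ b ∈ p, r a b → r b a → a = b)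
    (huv : (u ++ v).Sublist p) (hvu : (v ++ u).Sublist p) {a b : α} (ha : a ∈ u) (hb : b ∈ v) :
    a = b :=
  hanti a (huv.subset (List.mem_append_left v ha)) b (huv.subset (List.mem_append_right u hb))
    ((List.pairwise_append.1 (hp.sublist huv)).2.2 a ha b hb)
    ((List.pairwise_append.1 (hp.sublist hvu)).2.2 b hb a ha)

/-- The position of a letter in the order `x₀ < y₁ < ⋯ < y_n < x₁`. -/
def letterRank (n c : ℕ) : ℕ := if c = 1 then n + 2 else c

lemma pairwise_letterRank_pWord (n : ℕ) :
    (pWord n).Pairwise (fun a b => letterRank n a ≤ letterRank n b) := by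
  simp [pWord, List.pairwise_append, List.pairwise_flatten, List.pairwise_map, letterRank]
  exact ⟨List.pairwise_le_range, by intros; split_ifs <;> omega⟩

lemma letterRank_injOn_pWord (n : ℕ) : Set.InjOn (letterRank n) {c | c ∈ pWord n} := by
  intro a ha b hb h
  simp [pWord] at ha hb
  simp only [letterRank] at h
  split_ifs at h <;> omega

lemma count_flatten_map_range_pair (m c : ℕ) :
    (((List.range m).map (fun i => [i + 2, i + 2])).flatten).count c =
      if 2 ≤ c ∧ c ≤ m + 1 then 2 else 0 := by
  induction m with
  | zero => simp; omega
  | succ m ih =>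
    simp only [List.range_succ, List.map_append, List.map_cons, List.map_nil, List.flatten_append,
      List.flatten_cons, List.flatten_nil, List.append_nil, List.count_append, ih, List.count_cons,
      List.count_nil, beq_iff_eq]
    split_ifs <;> omega

lemma count_pWord_le (n c : ℕ) : (pWord n).count c ≤ 3 := by
  simp only [pWord, List.count_append, count_flatten_map_range_pair, List.count_cons,
    List.count_nil, beq_iff_eq]
  split_ifs <;> omega

lemma exists_forall_eq_of_infix_pWord {n : ℕ} {u v w : List ℕ} (hu : u ≠ []) (hv : v ≠ [])
    (huvw : u ++ v ++ w <:+: pWord n) (hvwu : v ++ w ++ u <:+: pWord n) :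
    ∃ a, ∀ b ∈ u ++ v ++ w, a = b := by
  have hsame : ∀ a ∈ u, ∀ b ∈ v ++ w, a = b := fun a ha b hb =>
    (pairwise_letterRank_pWord n).eq_of_append_sublist_of_append_sublist
      (fun a ha b hb hab hba => letterRank_injOn_pWord n ha hb (le_antisymm hab hba))
      (by simpa using huvw.sublist) hvwu.sublist ha hb
  obtain ⟨a, ha⟩ := List.exists_mem_of_ne_nil u hu
  obtain ⟨c, hc⟩ := List.exists_mem_of_ne_nil v hv
  refine ⟨a, fun b hb => ?_⟩
  rw [List.append_assoc, List.mem_append] at hb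
  rcases hb with hb | hb
  · exact (hsame a ha c (by simp [hc])).trans (hsame b hb c (by simp [hc])).symm
  · exact hsame a ha b hb

lemma eq_and_eq_of_infix_pWord {n : ℕ} {u v w : List ℕ} (hu : u ≠ []) (hv : v ≠ []) (hw : w ≠ [])
    (huvw : u ++ v ++ w <:+: pWord n) (hvwu : v ++ w ++ u <:+: pWord n) : u = v ∧ v = w := by
  obtain ⟨a, hall⟩ := exists_forall_eq_of_infix_pWord hu hv huvw hvwu
  have hlen : (u ++ v ++ w).length ≤ 3 := (List.count_eq_length.2 hall).symm.trans_le
    ((huvw.sublist.count_le a).trans (count_pWord_le n a))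
  have hsingle : ∀ l : List ℕ, l ≠ [] → l.length ≤ 1 → l ⊆ u ++ v ++ w → l = [a] :=
    fun l hl hl1 hsub => List.eq_replicate_iff.2
      ⟨le_antisymm hl1 (List.length_pos_iff.2 hl), fun b hb => (hall b (hsub hb)).symm⟩
  simp only [List.length_append] at hlen
  have := List.length_pos_iff.2 hu
  have := List.length_pos_iff.2 hv
  have := List.length_pos_iff.2 hw
  rw [hsingle u hu (by omega) (by simp), hsingle v hv (by omega) (by simp),
    hsingle w hw (by omega) (by simp)]
  exact ⟨rfl, rfl⟩

section

variable {W : List ℕ}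

lemma exists_eq_some_of_fwMul_eq_some {s t : FlatWord W} {x : {u : List ℕ // u ≠ [] ∧ u <:+: W}}
    (h : fwMul W s t = some x) : ∃ a b, s = some a ∧ t = some b ∧ x.1 = a.1 ++ b.1 := by
  rcases s with _ | a <;> rcases t with _ | b <;> try cases h
  by_cases hab : a.1 ++ b.1 <:+: W
  · have hmul : fwMul W (some a) (some b) = some ⟨a.1 ++ b.1, by simp [a.2.1], hab⟩ := dif_pos hab
    cases hmul.symm.trans h
    exact ⟨a, b, rfl, rfl, rfl⟩
  · have hmul : fwMul W (some a) (some b) = none := dif_neg hab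
    cases hmul.symm.trans h

lemma exists_eq_some_of_fwMul_fwMul_eq_some {s t r : FlatWord W}
    {x : {u : List ℕ // u ≠ [] ∧ u <:+: W}} (h : fwMul W (fwMul W s t) r = some x) :
    ∃ a b c, s = some a ∧ t = some b ∧ r = some c ∧ x.1 = a.1 ++ b.1 ++ c.1 := by
  obtain ⟨ab, c, hab, rfl, hx⟩ := exists_eq_some_of_fwMul_eq_some h
  obtain ⟨a, b, rfl, rfl, hab'⟩ := exists_eq_some_of_fwMul_eq_some hab
  exact ⟨a, b, c, rfl, rfl, rfl, by rw [hx, hab']⟩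

lemma fwAdd_none_left (t : FlatWord W) : fwAdd W none t = none := ite_self none

lemma fwAdd_none_right (s : FlatWord W) : fwAdd W s none = none := by
  by_cases h : s = none
  · rw [h]
    exact fwAdd_none_left none
  · exact if_neg h

lemma fwAdd_eq_none_of_or {s t : FlatWord W} (h : s = none ∨ t = none) : fwAdd W s t = none := by
  rcases h with rfl | rfl
  exacts [fwAdd_none_left t, fwAdd_none_right s]

lemma fwAdd_self (s : FlatWord W) : fwAdd W s s = s := if_pos rfl

end

lemma eq_and_eq_of_fwMul_ne_none {n : ℕ} {u v w : FlatWord (pWord n)}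
    (huvw : fwMul (pWord n) (fwMul (pWord n) u v) w ≠ none)
    (hvwu : fwMul (pWord n) (fwMul (pWord n) v w) u ≠ none) : u = v ∧ v = w := by
  obtain ⟨x, hx⟩ := Option.ne_none_iff_exists'.1 huvw
  obtain ⟨y, hy⟩ := Option.ne_none_iff_exists'.1 hvwu
  obtain ⟨a, b, c, rfl, rfl, rfl, hxval⟩ := exists_eq_some_of_fwMul_fwMul_eq_some hx
  obtain ⟨b', c', a', hb, hc, ha, hyval⟩ := exists_eq_some_of_fwMul_fwMul_eq_some hy
  cases hb; cases hc; cases ha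
  obtain ⟨hab, hbc⟩ := eq_and_eq_of_infix_pWord a.2.1 b.2.1 c.2.1 (hxval ▸ x.2.2) (hyval ▸ y.2.2)
  exact ⟨congrArg some (Subtype.ext hab), congrArg some (Subtype.ext hbc)⟩

/-- The flat semiring `S(p_n)` satisfies the identity `xyz + yzx ≈ xyz + yzx + xxx`. -/
theorem stmt_18 (n : ℕ) (u v w : FlatWord (pWord n)) :
    fwAdd (pWord n) (fwMul (pWord n) (fwMul (pWord n) u v) w)
        (fwMul (pWord n) (fwMul (pWord n) v w) u) =
      fwAdd (pWord n)
        (fwAdd (pWord n) (fwMul (pWord n) (fwMul (pWord n) u v) w)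
          (fwMul (pWord n) (fwMul (pWord n) v w) u))
        (fwMul (pWord n) (fwMul (pWord n) u u) u) := by
  by_cases hzero : fwMul (pWord n) (fwMul (pWord n) u v) w = none ∨
      fwMul (pWord n) (fwMul (pWord n) v w) u = none
  · rw [fwAdd_eq_none_of_or hzero, fwAdd_none_left]
  · obtain ⟨huvw, hvwu⟩ := not_or.1 hzero
    obtain ⟨rfl, rfl⟩ := eq_and_eq_of_fwMul_ne_none huvw hvwu
    rw [fwAdd_self, fwAdd_self]
end
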